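/- arXiv:1502.05955 — 10 statements merged into one kernel-verified Lean document; each statement's English description precedes it below -/
import Mathlib

section
/- Let w > 0 and let f : ℝ → ℝ be continuously differentiable on [0, w]. For τ > 0, define β(y) = f(y) + f'(y)/τ. Then ∫₀^w τ·e^{-τx}·β(w - x) dx + e^{-τw}·f(0) = f(w). In particular if f(0) = 0, the expected estimate ∫₀^w τ e^{-τx} β(w-x) dx equals f(w). -/
open Real MeasureTheory intervalIntegral

/-!
The integrand is the derivative of `x ↦ -e^{-τx} f(w - x)`, since
`τ e^{-τx} β(w - x) = e^{-τx} (τ f(w - x) + f'(w - x))`; the fundamental theorem of calculus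
on `[0, w]` then leaves exactly `f w - e^{-τw} f 0`.
-/

lemma hasDerivAt_neg_exp_mul_comp_const_sub {f : ℝ → ℝ} {d τ w x : ℝ}
    (hf : HasDerivAt f d (w - x)) :
    HasDerivAt (fun x => -(exp (-τ * x) * f (w - x)))
      (exp (-τ * x) * (τ * f (w - x) + d)) x := by
  have hexp : HasDerivAt (fun x => exp (-τ * x)) (exp (-τ * x) * -τ) x := by
    simpa using ((hasDerivAt_id x).const_mul (-τ)).exp
  have hrefl : HasDerivAt (fun x => f (w - x)) (-d) x := by
    simpa using hf.comp_const_sub w x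
  exact (hexp.mul hrefl).neg.congr_deriv (by ring)

lemma mapsTo_const_sub_Icc_zero (w : ℝ) :
    Set.MapsTo (fun x => w - x) (Set.Icc 0 w) (Set.Icc 0 w) :=
  fun _ ⟨h0, hw⟩ => ⟨sub_nonneg.mpr hw, sub_le_self w h0⟩

theorem integral_exp_neg_mul_mul_add_deriv {f f' : ℝ → ℝ} {w τ : ℝ} (hw : 0 ≤ w)
    (hderiv : ∀ y ∈ Set.Icc 0 w, HasDerivAt f (f' y) y)
    (hcont : ContinuousOn f' (Set.Icc 0 w)) :
    ∫ x in 0..w, exp (-τ * x) * (τ * f (w - x) + f' (w - x)) = f w - exp (-τ * w) * f 0 := by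
  have hrefl : ContinuousOn (fun x => w - x) (Set.Icc 0 w) := by fun_prop
  have hf : ContinuousOn f (Set.Icc 0 w) := fun y hy =>
    (hderiv y hy).continuousAt.continuousWithinAt
  have hintegrand : ContinuousOn (fun x => exp (-τ * x) * (τ * f (w - x) + f' (w - x)))
      (Set.Icc 0 w) :=
    (continuous_exp.comp (continuous_const_mul (-τ))).continuousOn.mul
      ((continuousOn_const.mul (hf.comp hrefl (mapsTo_const_sub_Icc_zero w))).add
        (hcont.comp hrefl (mapsTo_const_sub_Icc_zero w)))
  rw [integral_eq_sub_of_hasDerivAt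
    (fun x hx => hasDerivAt_neg_exp_mul_comp_const_sub
      (hderiv _ (mapsTo_const_sub_Icc_zero w (Set.uIcc_of_le hw ▸ hx))))
    (hintegrand.intervalIntegrable_of_Icc hw)]
  simp only [sub_self, sub_zero, mul_zero, exp_zero, one_mul]
  ring

/-- Unbiasedness of the continuous Sample-and-Hold estimator in the regime `τℓ > 1`:
for a key of weight `w`, the counted value is `w - x` with density `τ e^{-τ x}` on `(0, w)`,
and with probability `e^{-τ w}` the count is `0` (contributing `f 0`). -/
theorem stmt_0 (w τ : ℝ) (hw : 0 < w) (hτ : 0 < τ) (f f' : ℝ → ℝ)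
    (hderiv : ∀ x ∈ Set.Icc (0:ℝ) w, HasDerivAt f (f' x) x)
    (hcont : ContinuousOn f' (Set.Icc (0:ℝ) w)) :
    (∫ x in (0:ℝ)..w, τ * Real.exp (-τ * x) * (f (w - x) + f' (w - x) / τ))
      + Real.exp (-τ * w) * f 0 = f w := by
  have hintegrand : ∀ x, τ * exp (-τ * x) * (f (w - x) + f' (w - x) / τ)
      = exp (-τ * x) * (τ * f (w - x) + f' (w - x)) := fun x => by
    field_simp
  simp only [hintegrand, integral_exp_neg_mul_mul_add_deriv hw.le hderiv hcont, sub_add_cancel]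
end

section
/- Let w > 0, ℓ > 0, τ with 0 < τ < 1/ℓ, and let f : ℝ → ℝ be continuously differentiable on [0, w] with f(0) = 0. Define β(y) = f(y)/(ℓτ) + f'(y)/τ. Then ∫₀^w τ·e^{-x/ℓ}·β(w - x) dx = f(w). -/
open Real MeasureTheory intervalIntegral

/-! `e^{-x/ℓ} (f(w - x)/ℓ + f'(w - x))` is the derivative of `-e^{-x/ℓ} f(w - x)`, so the
integral telescopes to `f(w) - e^{-w/ℓ} f(0)`; the factor `1/τ` in `β` cancels the `τ` of the density. -/

section ExpWeightedIntegral

variable {w ℓ : ℝ} {f f' : ℝ → ℝ}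

lemma sub_mem_Icc_of_mem_uIcc (hw : 0 ≤ w) {x : ℝ} (hx : x ∈ Set.uIcc 0 w) :
    w - x ∈ Set.Icc 0 w := by
  rw [Set.uIcc_of_le hw] at hx
  exact ⟨by linarith [hx.2], by linarith [hx.1]⟩

lemma hasDerivAt_neg_exp_mul_comp_sub (hℓ : ℓ ≠ 0) {x : ℝ} (hf : HasDerivAt f (f' (w - x)) (w - x)) :
    HasDerivAt (fun x => -(exp (-x / ℓ) * f (w - x)))
      (exp (-x / ℓ) * (f (w - x) / ℓ + f' (w - x))) x := by
  have hexp : HasDerivAt (fun x => exp (-x / ℓ)) (exp (-x / ℓ) * (-1 / ℓ)) x :=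
    ((hasDerivAt_neg x).div_const ℓ).exp
  have hcomp : HasDerivAt (fun x => f (w - x)) (f' (w - x) * (-1)) x :=
    hf.comp x ((hasDerivAt_id x).const_sub w)
  exact (hexp.mul hcomp).neg.congr_deriv (by field_simp; ring)

theorem integral_exp_mul_comp_sub (hw : 0 ≤ w) (hℓ : ℓ ≠ 0)
    (hderiv : ∀ x ∈ Set.Icc 0 w, HasDerivAt f (f' x) x)
    (hcont : ContinuousOn f' (Set.Icc 0 w)) :
    ∫ x in (0:ℝ)..w, exp (-x / ℓ) * (f (w - x) / ℓ + f' (w - x))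
      = f w - exp (-w / ℓ) * f 0 := by
  have hmem := fun x (hx : x ∈ Set.uIcc 0 w) => sub_mem_Icc_of_mem_uIcc hw hx
  have hcontf : ContinuousOn f (Set.Icc 0 w) :=
    fun x hx => (hderiv x hx).continuousAt.continuousWithinAt
  have hsub : ContinuousOn (fun x : ℝ => w - x) (Set.uIcc 0 w) := by fun_prop
  have hintegrable : IntervalIntegrable
      (fun x => exp (-x / ℓ) * (f (w - x) / ℓ + f' (w - x))) volume 0 w :=
    (ContinuousOn.mul (by fun_prop)
      (((hcontf.comp hsub hmem).div_const ℓ).add (hcont.comp hsub hmem))).intervalIntegrable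
  rw [integral_eq_sub_of_hasDerivAt
    (fun x hx => hasDerivAt_neg_exp_mul_comp_sub hℓ (hderiv _ (hmem x hx))) hintegrable]
  simp only [neg_zero, zero_div, exp_zero, one_mul, sub_self, sub_zero]
  ring

end ExpWeightedIntegral

theorem stmt_1_general (w ℓ τ : ℝ) (hw : 0 < w) (hℓ : 0 < ℓ) (hτ : 0 < τ)
    (f f' : ℝ → ℝ)
    (hderiv : ∀ x ∈ Set.Icc (0:ℝ) w, HasDerivAt f (f' x) x)
    (hcont : ContinuousOn f' (Set.Icc (0:ℝ) w)) (hf0 : f 0 = 0) :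
    ∫ x in (0:ℝ)..w, τ * Real.exp (-x / ℓ) * (f (w - x) / (ℓ * τ) + f' (w - x) / τ)
      = f w := by
  have hintegrand : (fun x => τ * exp (-x / ℓ) * (f (w - x) / (ℓ * τ) + f' (w - x) / τ))
      = fun x => exp (-x / ℓ) * (f (w - x) / ℓ + f' (w - x)) := by
    funext x
    field_simp
  rw [hintegrand, integral_exp_mul_comp_sub hw.le hℓ.ne' hderiv hcont, hf0, mul_zero, sub_zero]

/-- Unbiasedness of the continuous Sample-and-Hold estimator in the regime `τℓ < 1`:
a key of weight `w` has counted value `w - x` with density `τ e^{-x/ℓ}` for `x ∈ (0, w)`,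
and the estimator uses `β(y) = f(y)/(ℓτ) + f'(y)/τ`. -/
theorem stmt_1 (w ℓ τ : ℝ) (hw : 0 < w) (hℓ : 0 < ℓ) (hτ : 0 < τ) (hτℓ : τ < 1 / ℓ)
    (f f' : ℝ → ℝ)
    (hderiv : ∀ x ∈ Set.Icc (0:ℝ) w, HasDerivAt f (f' x) x)
    (hcont : ContinuousOn f' (Set.Icc (0:ℝ) w)) (hf0 : f 0 = 0) :
    ∫ x in (0:ℝ)..w, τ * Real.exp (-x / ℓ) * (f (w - x) / (ℓ * τ) + f' (w - x) / τ)
      = f w :=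
  stmt_1_general w ℓ τ hw hℓ hτ f f' hderiv hcont hf0
end

section
/- Let Y be exponentially distributed with rate w > 0 and let U be uniform on [0, 1/ℓ], independent of Y, for some ℓ > 0. Define the seed S = U if Y ≤ 1/ℓ, and S = Y otherwise. Then for any threshold τ > 0, the inclusion probability P(S < τ) equals (1 - e^{-w·max(1/ℓ, τ)})·min(1, τℓ). -/
/-!
Split the event `{S < τ}` according to whether `Y ≤ 1/ℓ`. On `{Y ≤ 1/ℓ}` the seed is `U`, so
by independence this part has probability `(1 - e^{-w/ℓ}) · min(1, τℓ)`; the other part is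
`{1/ℓ < Y < τ}`, of probability `e^{-w/ℓ} - e^{-wτ}` if `1/ℓ < τ` and `0` otherwise. When
`1/ℓ < τ`, `min(1, τℓ) = 1` and the two terms add up to `1 - e^{-wτ}`.
-/

open MeasureTheory ProbabilityTheory Filter Topology Set

section

variable {Ω : Type*} [MeasurableSpace Ω] {μ : Measure Ω} {Y U : Ω → ℝ}

theorem tendsto_measure_lt_nhdsLT [IsFiniteMeasure μ] (hY : Measurable Y) (t : ℝ) :
    Tendsto (fun s ↦ μ {ω | s < Y ω}) (𝓝[<] t) (𝓝 (μ {ω | t ≤ Y ω})) := by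
  -- `tendsto_measure_biInter_gt` is about right limits, so index the sets by `r = -s`.
  have h := tendsto_measure_biInter_gt (μ := μ) (s := fun r ↦ {ω | -r < Y ω}) (a := -t)
    (fun _ _ ↦ (hY measurableSet_Ioi).nullMeasurableSet)
    (fun _ _ _ hij _ hω ↦ lt_of_le_of_lt (neg_le_neg hij) hω)
    ⟨-t + 1, by linarith, measure_ne_top _ _⟩
  have hinter : ⋂ r > -t, {ω | -r < Y ω} = {ω | t ≤ Y ω} := by
    ext ω
    simp only [mem_iInter, mem_ofPred_eq]
    refine ⟨fun h ↦ le_of_forall_lt fun s hs ↦ ?_, fun h r hr ↦ by linarith⟩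
    simpa using h (-s) (neg_lt_neg hs)
  rw [hinter] at h
  simpa [Function.comp_def] using h.comp tendsto_neg_nhdsLT

theorem MeasureTheory.pdf.IsUniform.measure_lt_of_Icc {a : ℝ} (ha : 0 < a)
    (hU : pdf.IsUniform U (Icc 0 a) μ volume) (τ : ℝ) :
    μ {ω | U ω < τ} = ENNReal.ofReal (min 1 (τ / a)) := by
  have hvol : volume (Icc 0 a) = ENNReal.ofReal a := by simp
  have hinter : Icc 0 a ∩ Iic τ = Icc 0 (min a τ) := by
    ext x; simp only [mem_inter_iff, mem_Icc, mem_Iic, le_min_iff]; tauto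
  calc μ {ω | U ω < τ} = volume (Icc 0 a ∩ Iio τ) / volume (Icc 0 a) :=
        hU.measure_preimage (by simp [ha]) (by simp) measurableSet_Iio
    _ = ENNReal.ofReal (min a τ) / ENNReal.ofReal a := by
        rw [measure_congr ((ae_eq_refl _).inter Iio_ae_eq_Iic), hinter, hvol, Real.volume_Icc,
          sub_zero]
    _ = ENNReal.ofReal (min 1 (τ / a)) := by
        rw [← ENNReal.ofReal_div_of_pos ha, ← min_div_div_right ha.le, div_self ha.ne']

theorem measure_ite_lt_of_indepFun (hY : Measurable Y) (hindep : IndepFun Y U μ) (c τ : ℝ) :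
    μ {ω | (if Y ω ≤ c then U ω else Y ω) < τ}
      = μ {ω | Y ω ≤ c} * μ {ω | U ω < τ} + μ (Y ⁻¹' Ioo c τ) := by
  have hsplit : {ω | (if Y ω ≤ c then U ω else Y ω) < τ}
      = (Y ⁻¹' Iic c ∩ U ⁻¹' Iio τ) ∪ Y ⁻¹' Ioo c τ := by
    ext ω
    by_cases h : Y ω ≤ c
    · simp [h]
    · simp [h, not_le.mp h]
  have hdisj : Disjoint (Y ⁻¹' Iic c ∩ U ⁻¹' Iio τ) (Y ⁻¹' Ioo c τ) :=
    disjoint_left.mpr fun _ h h' ↦ not_lt.mpr h.1 h'.1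
  rw [hsplit, measure_union hdisj (hY measurableSet_Ioo),
    hindep.measure_inter_preimage_eq_mul _ _ measurableSet_Iic measurableSet_Iio]
  rfl

section ExponentialTail

variable [IsProbabilityMeasure μ] {w : ℝ}

theorem measure_ge_eq_exp_of_tail (hY : Measurable Y)
    (hYexp : ∀ t : ℝ, 0 ≤ t → μ {ω | t < Y ω} = ENNReal.ofReal (Real.exp (-w * t)))
    {t : ℝ} (ht : 0 < t) :
    μ {ω | t ≤ Y ω} = ENNReal.ofReal (Real.exp (-w * t)) := by
  have hcont : Tendsto (fun s ↦ ENNReal.ofReal (Real.exp (-w * s))) (𝓝[<] t)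
      (𝓝 (ENNReal.ofReal (Real.exp (-w * t)))) := by
    refine (Continuous.tendsto' ?_ _ _ rfl).mono_left nhdsWithin_le_nhds
    exact ENNReal.continuous_ofReal.comp (by fun_prop)
  refine tendsto_nhds_unique_of_eventuallyEq (tendsto_measure_lt_nhdsLT hY t) hcont ?_
  filter_upwards [Ioo_mem_nhdsLT ht] with s hs using hYexp s hs.1.le

theorem measure_le_eq_one_sub_exp_of_tail (hY : Measurable Y)
    (hYexp : ∀ t : ℝ, 0 ≤ t → μ {ω | t < Y ω} = ENNReal.ofReal (Real.exp (-w * t)))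
    {c : ℝ} (hc : 0 ≤ c) :
    μ {ω | Y ω ≤ c} = ENNReal.ofReal (1 - Real.exp (-w * c)) := by
  have hcompl : {ω | Y ω ≤ c} = {ω | c < Y ω}ᶜ := by ext; simp
  have hmeas : MeasurableSet {ω | c < Y ω} := hY measurableSet_Ioi
  rw [hcompl, prob_compl_eq_one_sub hmeas, hYexp c hc,
    ENNReal.ofReal_sub _ (Real.exp_nonneg _), ENNReal.ofReal_one]

theorem measure_Ioo_eq_exp_sub_exp_of_tail (hY : Measurable Y)
    (hYexp : ∀ t : ℝ, 0 ≤ t → μ {ω | t < Y ω} = ENNReal.ofReal (Real.exp (-w * t)))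
    (hw : 0 ≤ w) {c : ℝ} (hc : 0 ≤ c) (τ : ℝ) :
    μ (Y ⁻¹' Ioo c τ) = ENNReal.ofReal (Real.exp (-w * c) - Real.exp (-w * τ)) := by
  rcases le_or_gt τ c with hτc | hcτ
  · have hexp : Real.exp (-w * c) ≤ Real.exp (-w * τ) := Real.exp_le_exp.mpr (by nlinarith)
    rw [Ioo_eq_empty hτc.not_gt, preimage_empty, measure_empty,
      ENNReal.ofReal_of_nonpos (sub_nonpos.mpr hexp)]
  · have hdiff : Y ⁻¹' Ioo c τ = {ω | c < Y ω} \ {ω | τ ≤ Y ω} := by ext; simp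
    have hmeas : MeasurableSet {ω | τ ≤ Y ω} := hY measurableSet_Ici
    have hsub : {ω | τ ≤ Y ω} ⊆ {ω | c < Y ω} := fun _ h ↦ hcτ.trans_le h
    rw [hdiff, measure_sdiff hsub hmeas.nullMeasurableSet (measure_ne_top _ _), hYexp c hc,
      measure_ge_eq_exp_of_tail hY hYexp (hc.trans_lt hcτ),
      ENNReal.ofReal_sub _ (Real.exp_nonneg _)]

end ExponentialTail

end

theorem stmt_3_general {Ω : Type*} [MeasurableSpace Ω] (μ : Measure Ω) [IsProbabilityMeasure μ]
    (w ℓ τ : ℝ) (hw : 0 < w) (hℓ : 0 < ℓ)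
    (Y U : Ω → ℝ) (hY : Measurable Y)
    (hindep : IndepFun Y U μ)
    (hYexp : ∀ t : ℝ, 0 ≤ t → μ {ω | t < Y ω} = ENNReal.ofReal (Real.exp (-w * t)))
    (hUunif : MeasureTheory.pdf.IsUniform U (Set.Icc 0 (1 / ℓ)) μ volume) :
    μ {ω | (if Y ω ≤ 1 / ℓ then U ω else Y ω) < τ}
      = ENNReal.ofReal ((1 - Real.exp (-w * max (1 / ℓ) τ)) * min 1 (τ * ℓ)) := by
  have hc : 0 < 1 / ℓ := by positivity
  have hexp_le_one : Real.exp (-w * (1 / ℓ)) ≤ 1 := Real.exp_le_one_iff.mpr (by nlinarith)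
  rw [measure_ite_lt_of_indepFun hY hindep, measure_le_eq_one_sub_exp_of_tail hY hYexp hc.le,
    hUunif.measure_lt_of_Icc hc, measure_Ioo_eq_exp_sub_exp_of_tail hY hYexp hw.le hc.le,
    div_div_eq_mul_div, div_one]
  rcases le_total τ (1 / ℓ) with hτ | hτ
  · have hexp : Real.exp (-w * (1 / ℓ)) ≤ Real.exp (-w * τ) :=
      Real.exp_le_exp.mpr (by nlinarith)
    rw [max_eq_left hτ, min_eq_right ((le_div_iff₀ hℓ).mp hτ),
      ENNReal.ofReal_of_nonpos (sub_nonpos.mpr hexp), add_zero,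
      ← ENNReal.ofReal_mul (sub_nonneg.mpr hexp_le_one)]
  · have hexp : Real.exp (-w * τ) ≤ Real.exp (-w * (1 / ℓ)) :=
      Real.exp_le_exp.mpr (by nlinarith)
    rw [max_eq_right hτ, min_eq_left ((div_le_iff₀ hℓ).mp hτ), ENNReal.ofReal_one, mul_one,
      mul_one, ← ENNReal.ofReal_add (sub_nonneg.mpr hexp_le_one) (sub_nonneg.mpr hexp)]
    ring_nf

/-- Inclusion probability of continuous `SH_ℓ`: `Y ~ Exp(w)`, `U ~ U[0, 1/ℓ]` independent,
seed `S = U` if `Y ≤ 1/ℓ` and `S = Y` otherwise.  Then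
`P(S < τ) = (1 - e^{-w·max(1/ℓ,τ)})·min(1, τℓ)`. -/
theorem stmt_3 {Ω : Type*} [MeasurableSpace Ω] (μ : Measure Ω) [IsProbabilityMeasure μ]
    (w ℓ τ : ℝ) (hw : 0 < w) (hℓ : 0 < ℓ) (hτ : 0 < τ)
    (Y U : Ω → ℝ) (hY : Measurable Y) (hU : Measurable U)
    (hindep : IndepFun Y U μ)
    (hYexp : ∀ t : ℝ, 0 ≤ t → μ {ω | t < Y ω} = ENNReal.ofReal (Real.exp (-w * t)))
    (hYpos : ∀ᵐ ω ∂μ, 0 < Y ω)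
    (hUunif : MeasureTheory.pdf.IsUniform U (Set.Icc 0 (1 / ℓ)) μ volume) :
    μ {ω | (if Y ω ≤ 1 / ℓ then U ω else Y ω) < τ}
      = ENNReal.ofReal ((1 - Real.exp (-w * max (1 / ℓ) τ)) * min 1 (τ * ℓ)) :=
  stmt_3_general μ w ℓ τ hw hℓ Y U hY hindep hYexp hUunif
end

section
/- Let φ be a nonnegative non-increasing sequence with φ₁ = τ > 0, and ψ its 'Toeplitz inverse' sequence defined by ψ₁ = 1/τ and Σ_{j=1}^{i} ψⱼ·φ_{1+i-j} = 0 for i > 1. Let f : ℕ → ℝ be non-decreasing with f(0) = 0, and define β_i = Σ_{j=1}^{i} ψⱼ·f(i-j+1). Then β_i ≥ 0 for all i ≥ 1. -/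
/-- Abel summation with prefix sums over `Icc 1 k`. -/
lemma abel_icc (ψ a : ℕ → ℝ) :
    ∀ i, 1 ≤ i →
      ∑ j ∈ Finset.Icc 1 i, ψ j * a j =
        (∑ j ∈ Finset.Icc 1 i, ψ j) * a i +
          ∑ k ∈ Finset.Icc 1 (i - 1), (∑ j ∈ Finset.Icc 1 k, ψ j) * (a k - a (k + 1)) := by
  intro i hi
  induction i, hi using Nat.le_induction with
  | base => simp
  | succ n hn ih =>
    rw [Finset.sum_Icc_succ_top (by omega : 1 ≤ n + 1)]
    have h1 : n + 1 - 1 = n := by omega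
    rw [h1, Finset.sum_Icc_succ_top (by omega : 1 ≤ n + 1), ih]
    have h2 : n - 1 + 1 = n := by omega
    have h3 : ∑ k ∈ Finset.Icc 1 n, (∑ j ∈ Finset.Icc 1 k, ψ j) * (a k - a (k + 1)) =
        (∑ k ∈ Finset.Icc 1 (n - 1), (∑ j ∈ Finset.Icc 1 k, ψ j) * (a k - a (k + 1))) +
          (∑ j ∈ Finset.Icc 1 n, ψ j) * (a n - a (n + 1)) := by
      rw [show Finset.Icc 1 n = Finset.Icc 1 (n - 1 + 1) by rw [h2],
        Finset.sum_Icc_succ_top (by omega : 1 ≤ n - 1 + 1), h2]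
    rw [h3]
    ring

lemma psi_prefix_nonneg (τ : ℝ) (hτpos : 0 < τ)
    (φ ψ : ℕ → ℝ) (hφ1 : φ 1 = τ)
    (hφnonneg : ∀ i, 1 ≤ i → 0 ≤ φ i)
    (hφmono : ∀ i, 1 ≤ i → φ (i + 1) ≤ φ i)
    (hψ1 : ψ 1 = 1 / τ)
    (hψ : ∀ i, 2 ≤ i → ∑ j ∈ Finset.Icc 1 i, ψ j * φ (1 + i - j) = 0) :
    ∀ i, 1 ≤ i → 0 ≤ ∑ j ∈ Finset.Icc 1 i, ψ j := by
  intro i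
  induction i using Nat.strong_induction_on with
  | _ i IH =>
    intro hi
    rcases eq_or_lt_of_le hi with h1 | h2
    · simp [← h1, hψ1]; positivity
    · -- i ≥ 2
      have hi2 : 2 ≤ i := h2
      have key := hψ i hi2
      rw [abel_icc ψ (fun j => φ (1 + i - j)) i hi] at key
      have hai : 1 + i - i = 1 := by omega
      rw [hai, hφ1] at key
      have hterm : ∀ k ∈ Finset.Icc 1 (i - 1),
          (∑ j ∈ Finset.Icc 1 k, ψ j) * (φ (1 + i - k) - φ (1 + i - (k + 1))) ≤ 0 := by
        intro k hk
        simp only [Finset.mem_Icc] at hk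
        apply mul_nonpos_of_nonneg_of_nonpos
        · exact IH k (by omega) hk.1
        · have h3 : 1 + i - (k + 1) = i - k := by omega
          have h4 : 1 + i - k = (i - k) + 1 := by omega
          rw [h3, h4]
          have := hφmono (i - k) (by omega)
          linarith
      have hsum : ∑ k ∈ Finset.Icc 1 (i - 1),
          (∑ j ∈ Finset.Icc 1 k, ψ j) * (φ (1 + i - k) - φ (1 + i - (k + 1))) ≤ 0 :=
        Finset.sum_nonpos hterm
      nlinarith [key, hsum]

/-- Nonnegativity of the discrete `SH_ℓ` estimation coefficients: `φ` is nonnegative,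
non-increasing with `φ 1 = τ > 0`, `ψ` is its Toeplitz inverse
(`ψ 1 = 1/τ` and `∑_{j=1}^{i} ψ j · φ (1+i-j) = 0` for `i > 1`), and `f : ℕ → ℝ` is
non-decreasing with `f 0 = 0`.  Then `β i = ∑_{j=1}^{i} ψ j · f (i-j+1) ≥ 0` for all `i ≥ 1`. -/
theorem stmt_6 (τ : ℝ) (hτpos : 0 < τ)
    (φ ψ : ℕ → ℝ) (hφ1 : φ 1 = τ)
    (hφnonneg : ∀ i, 1 ≤ i → 0 ≤ φ i)
    (hφmono : ∀ i, 1 ≤ i → φ (i + 1) ≤ φ i)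
    (hψ1 : ψ 1 = 1 / τ)
    (hψ : ∀ i, 2 ≤ i → ∑ j ∈ Finset.Icc 1 i, ψ j * φ (1 + i - j) = 0)
    (f : ℕ → ℝ) (hf : Monotone f) (hf0 : f 0 = 0) :
    ∀ i, 1 ≤ i → 0 ≤ ∑ j ∈ Finset.Icc 1 i, ψ j * f (i - j + 1) := by
  intro i hi
  have hS := psi_prefix_nonneg τ hτpos φ ψ hφ1 hφnonneg hφmono hψ1 hψ
  rw [abel_icc ψ (fun j => f (i - j + 1)) i hi]
  have hii : i - i + 1 = 1 := by omega
  apply add_nonneg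
  · apply mul_nonneg (hS i hi)
    rw [hii, ← hf0]; exact hf (by omega)
  · apply Finset.sum_nonneg
    intro k hk
    simp only [Finset.mem_Icc] at hk
    apply mul_nonneg (hS k hk.1)
    have h3 : i - (k + 1) + 1 = i - k := by omega
    have h4 : i - k + 1 = (i - k) + 1 := rfl
    simp only [h3]
    have := hf (Nat.le_succ (i - k))
    linarith [hf (Nat.le_succ (i - k))]
end

section
/- Let φ and ψ be sequences with Σ_{j=1}^{i} ψⱼ φ_{1+i-j} = [i = 1] (Kronecker delta) for all i ≥ 1, where φ₁ ≠ 0. Let m : ℕ≥1 → ℝ be finitely supported, define o_i = Σ_{j ≥ i} φ_{j-i+1}·m_j, and define β_i = Σ_{j=1}^{i} ψⱼ·f(i-j+1) for a function f. Then Σ_i o_i·β_i = Σ_w f(w)·m_w. -/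
/-!
After shifting indices by one, `∑_{j=1}^{i} a j · b (i - j + 1)` is the coefficient of `X^(i-1)`
in the product of the generating functions `∑ₙ a (n+1) Xⁿ` and `∑ₙ b (n+1) Xⁿ`. The hypothesis
says that the generating functions `Ψ` of `ψ` and `Φ` of `φ` are mutually inverse, and `β` has
generating function `Ψ F`. Exchanging the order of summation turns the left-hand side into
`∑_w m w · [X^(w-1)] (Ψ F Φ)`, and `Ψ F Φ = F`.
-/

open Finset PowerSeries

section GenFunFromOne

variable {R : Type*} [CommSemiring R]

noncomputable def genFunFromOne (a : ℕ → R) : R⟦X⟧ :=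
  mk fun n => a (n + 1)

@[simp]
lemma coeff_genFunFromOne (a : ℕ → R) (n : ℕ) : coeff n (genFunFromOne a) = a (n + 1) :=
  coeff_mk _ _

lemma coeff_genFunFromOne_mul (a b : ℕ → R) (n : ℕ) :
    coeff n (genFunFromOne a * genFunFromOne b) =
      ∑ i ∈ Icc 1 (n + 1), a i * b (n + 1 - i + 1) := by
  rw [coeff_mul, Nat.sum_antidiagonal_eq_sum_range_succ_mk, ← Ico_add_one_right_eq_Icc,
    sum_Ico_eq_sum_range, Nat.add_sub_cancel]
  refine sum_congr rfl fun k hk => ?_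
  rw [mem_range] at hk
  simp only [coeff_genFunFromOne]
  congr 2 <;> omega

lemma genFunFromOne_mul_eq_one {ψ φ : ℕ → R}
    (hinv : ∀ i, 1 ≤ i → ∑ j ∈ Icc 1 i, ψ j * φ (1 + i - j) = if i = 1 then 1 else 0) :
    genFunFromOne ψ * genFunFromOne φ = 1 := by
  ext n
  rw [coeff_genFunFromOne_mul, coeff_one]
  convert hinv (n + 1) (Nat.le_add_left 1 n) using 1
  · refine sum_congr rfl fun j hj => ?_
    rw [mem_Icc] at hj
    congr 2
    omega
  · simp

lemma sum_Icc_convolution_mul_eq_self {ψ φ : ℕ → R}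
    (hinv : ∀ i, 1 ≤ i → ∑ j ∈ Icc 1 i, ψ j * φ (1 + i - j) = if i = 1 then 1 else 0)
    (f : ℕ → R) {w : ℕ} (hw : 1 ≤ w) :
    ∑ i ∈ Icc 1 w, (∑ j ∈ Icc 1 i, ψ j * f (i - j + 1)) * φ (w - i + 1) = f w := by
  set β : ℕ → R := fun i => ∑ j ∈ Icc 1 i, ψ j * f (i - j + 1)
  have hβ : genFunFromOne β = genFunFromOne ψ * genFunFromOne f := by
    ext n
    rw [coeff_genFunFromOne_mul, coeff_genFunFromOne]
  obtain ⟨n, rfl⟩ := Nat.exists_eq_add_of_le' hw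
  calc ∑ i ∈ Icc 1 (n + 1), β i * φ (n + 1 - i + 1)
      = coeff n (genFunFromOne β * genFunFromOne φ) := (coeff_genFunFromOne_mul β φ n).symm
    _ = coeff n ((genFunFromOne ψ * genFunFromOne φ) * genFunFromOne f) := by
        rw [hβ, mul_right_comm]
    _ = f (n + 1) := by rw [genFunFromOne_mul_eq_one hinv, one_mul, coeff_genFunFromOne]

end GenFunFromOne

theorem stmt_7_general (φ ψ : ℕ → ℝ)
    (hinv : ∀ i, 1 ≤ i →
      ∑ j ∈ Finset.Icc 1 i, ψ j * φ (1 + i - j) = if i = 1 then 1 else 0)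
    (f : ℕ → ℝ) (N : ℕ) (m : ℕ → ℝ) :
    ∑ i ∈ Finset.Icc 1 N,
        (∑ j ∈ Finset.Icc i N, φ (j - i + 1) * m j) *
        (∑ j ∈ Finset.Icc 1 i, ψ j * f (i - j + 1))
      = ∑ w ∈ Finset.Icc 1 N, f w * m w := by
  simp_rw [sum_mul]
  rw [sum_comm' (t' := Icc 1 N) (s' := fun w => Icc 1 w)
    (fun i w => by simp only [mem_Icc]; omega)]
  refine sum_congr rfl fun w hw => ?_
  rw [← sum_Icc_convolution_mul_eq_self hinv f (mem_Icc.mp hw).1, sum_mul]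
  exact sum_congr rfl fun i _ => by ring

/-- Unbiasedness identity of the discrete `SH_ℓ` streaming estimator: if
`∑_{j=1}^{i} ψ j · φ (1+i-j) = [i = 1]` for all `i ≥ 1`, `m` is supported on `{1,…,N}`,
`o i = ∑_{j=i}^{N} φ (j-i+1)·m j` and `β i = ∑_{j=1}^{i} ψ j · f (i-j+1)`, then
`∑ i o i · β i = ∑ w f w · m w`. -/
theorem stmt_7 (φ ψ : ℕ → ℝ) (hφ1 : φ 1 ≠ 0)
    (hinv : ∀ i, 1 ≤ i →
      ∑ j ∈ Finset.Icc 1 i, ψ j * φ (1 + i - j) = if i = 1 then 1 else 0)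
    (f : ℕ → ℝ) (N : ℕ) (m : ℕ → ℝ) (hm : ∀ j, N < j → m j = 0) :
    ∑ i ∈ Finset.Icc 1 N,
        (∑ j ∈ Finset.Icc i N, φ (j - i + 1) * m j) *
        (∑ j ∈ Finset.Icc 1 i, ψ j * f (i - j + 1))
      = ∑ w ∈ Finset.Icc 1 N, f w * m w :=
  stmt_7_general φ ψ hinv f N m
end

section
/- Fix integer ℓ ≥ 1 and τ ∈ (0, 1]. Define φ_i = τ·Σ_{j=1}^{min(i-1, ℓ-1)} a_{i-1,j}·(1-τ)^j·((ℓ-j)/ℓ) for i ≥ 2 and φ₁ = τ. Then the sequence (φ_i) is non-increasing: φ_i ≥ φ_{i+1} for all i ≥ 1. -/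
/-- Monotonicity of the first-count probabilities of discrete `SH_ℓ`:
`φ 1 = τ` and `φ i = τ·∑_{j=1}^{min(i-1,ℓ-1)} a (i-1) j·(1-τ)^j·((ℓ-j)/ℓ)` for `i ≥ 2`,
where `a i j` is the distribution of the number of used buckets after `i` uniform draws
from `ℓ` buckets.  Then `φ` is non-increasing. -/
theorem stmt_10 (ℓ : ℕ) (hℓ : 1 ≤ ℓ) (τ : ℝ) (hτpos : 0 < τ) (hτ1 : τ ≤ 1)
    (a : ℕ → ℕ → ℝ)
    (hzero : ∀ i j, (j = 0 ∨ min i ℓ < j) → a i j = 0)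
    (hinit : a 1 1 = 1)
    (hrec : ∀ i, 2 ≤ i → ∀ j, 1 ≤ j → j ≤ min i ℓ →
      a i j = a (i - 1) j * ((j : ℝ) / ℓ) + a (i - 1) (j - 1) * (((ℓ : ℝ) - j + 1) / ℓ))
    (φ : ℕ → ℝ) (hφ1 : φ 1 = τ)
    (hφ : ∀ i, 2 ≤ i → φ i = τ * ∑ j ∈ Finset.Icc 1 (min (i - 1) (ℓ - 1)),
      a (i - 1) j * (1 - τ) ^ j * (((ℓ : ℝ) - j) / ℓ)) :
    ∀ i, 1 ≤ i → φ (i + 1) ≤ φ i := by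
  have hℓR : (0:ℝ) < ℓ := by exact_mod_cast hℓ
  have hτ' : 0 ≤ 1 - τ := by linarith
  -- nonnegativity of a
  have hapos : ∀ i j, 0 ≤ a i j := by
    intro i
    induction i with
    | zero =>
      intro j
      have : a 0 j = 0 := hzero 0 j (by omega)
      simp [this]
    | succ n ih =>
      intro j
      rcases Nat.eq_or_lt_of_le (Nat.zero_le n) with h0 | h0
      · -- n = 0, i = 1
        rcases eq_or_ne j 1 with rfl | hj
        · rw [← h0, hinit]; norm_num
        · have : a (n+1) j = 0 := hzero (n+1) j (by omega)
          simp [this]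
      · -- n ≥ 1, i = n+1 ≥ 2
        by_cases hj : 1 ≤ j ∧ j ≤ min (n+1) ℓ
        · have hr := hrec (n+1) (by omega) j hj.1 hj.2
          simp only [Nat.add_sub_cancel] at hr
          rw [hr]
          have h1 : 0 ≤ a n j := ih j
          have h2 : 0 ≤ a n (j-1) := ih (j-1)
          have hc1 : (0:ℝ) ≤ (j:ℝ)/ℓ := by positivity
          have hc2 : (0:ℝ) ≤ ((ℓ:ℝ) - j + 1)/ℓ := by
            apply div_nonneg _ (le_of_lt hℓR)
            have : (j:ℝ) ≤ ℓ := by exact_mod_cast le_trans hj.2 (min_le_right _ _)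
            linarith
          positivity
        · have : a (n+1) j = 0 := hzero (n+1) j (by omega)
          simp [this]
  -- abbreviation w
  set w : ℕ → ℝ := fun j => (1 - τ) ^ j * (((ℓ : ℝ) - j) / ℓ) with hwdef
  have hwnn : ∀ j, j ≤ ℓ → 0 ≤ w j := by
    intro j hj
    have : (j:ℝ) ≤ ℓ := by exact_mod_cast hj
    have h1 : (0:ℝ) ≤ ((ℓ:ℝ) - j)/ℓ := by
      apply div_nonneg _ (le_of_lt hℓR); linarith
    positivity
  -- extension of the truncated sum to Icc 1 (ℓ-1)
  have hext : ∀ i, 1 ≤ i →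
      ∑ j ∈ Finset.Icc 1 (min i (ℓ - 1)), a i j * (1 - τ) ^ j * (((ℓ : ℝ) - j) / ℓ)
      = ∑ j ∈ Finset.Icc 1 (ℓ - 1), a i j * (1 - τ) ^ j * (((ℓ : ℝ) - j) / ℓ) := by
    intro i hi
    apply Finset.sum_subset
    · apply Finset.Icc_subset_Icc_right; omega
    · intro j hj hj'
      simp only [Finset.mem_Icc] at hj hj'
      have : a i j = 0 := hzero i j (by omega)
      simp [this]
  -- one-step decrease of the extended sum, for i ≥ 2
  have hstep : ∀ i, 2 ≤ i →
      ∑ j ∈ Finset.Icc 1 (ℓ - 1), a i j * (1 - τ) ^ j * (((ℓ : ℝ) - j) / ℓ)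
      ≤ ∑ j ∈ Finset.Icc 1 (ℓ - 1), a (i-1) j * (1 - τ) ^ j * (((ℓ : ℝ) - j) / ℓ) := by
    intro i hi
    rcases Nat.lt_or_ge ℓ 2 with hℓ2 | hℓ2
    · have : ℓ - 1 = 0 := by omega
      simp [this]
    -- rewrite each term using the recurrence
    have key : ∀ j ∈ Finset.Icc 1 (ℓ - 1),
        a i j * (1 - τ) ^ j * (((ℓ : ℝ) - j) / ℓ)
        = a (i-1) j * ((j:ℝ)/ℓ) * w j
          + a (i-1) (j-1) * (((ℓ:ℝ) - j + 1)/ℓ) * w j := by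
      intro j hj
      simp only [Finset.mem_Icc] at hj
      by_cases hji : j ≤ i
      · rw [hrec i hi j hj.1 (by omega)]
        simp only [hwdef]; ring
      · have h1 : a i j = 0 := hzero i j (by omega)
        have h2 : a (i-1) j = 0 := hzero (i-1) j (by omega)
        have h3 : a (i-1) (j-1) = 0 := hzero (i-1) (j-1) (by omega)
        simp [h1, h2, h3]
    rw [Finset.sum_congr rfl key, Finset.sum_add_distrib]
    -- the shifted sum
    set G : ℕ → ℝ := fun k => a (i-1) k * (((ℓ:ℝ) - k)/ℓ) * w (k+1) with hGdef
    have hshift1 : ∀ j ∈ Finset.Icc 1 (ℓ - 1),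
        a (i-1) (j-1) * (((ℓ:ℝ) - j + 1)/ℓ) * w j = G (j-1) := by
      intro j hj
      simp only [Finset.mem_Icc] at hj
      have h1 : (j - 1) + 1 = j := by omega
      have h2 : ((j - 1 : ℕ) : ℝ) = (j:ℝ) - 1 := by
        have : (1:ℕ) ≤ j := hj.1
        push_cast [this]; ring
      simp only [hGdef, h1, h2]; ring_nf
    rw [Finset.sum_congr rfl hshift1]
    have hre : ∑ j ∈ Finset.Icc 1 (ℓ - 1), G (j-1) = ∑ k ∈ Finset.Icc 0 (ℓ - 2), G k := by
      apply Finset.sum_nbij' (fun j => j - 1) (fun k => k + 1)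
      · intro j hj; simp only [Finset.mem_Icc] at *; omega
      · intro k hk; simp only [Finset.mem_Icc] at *; omega
      · intro j hj; simp only [Finset.mem_Icc] at hj; omega
      · intro k hk; simp only [Finset.mem_Icc] at hk; omega
      · intro j hj; rfl
    have hG0 : G 0 = 0 := by
      have : a (i-1) 0 = 0 := hzero (i-1) 0 (by omega)
      simp [hGdef, this]
    have hGtop : G (ℓ - 1) = 0 := by
      have hw0 : w ((ℓ - 1) + 1) = 0 := by
        have h1 : (ℓ - 1) + 1 = ℓ := by omega
        simp [hwdef, h1]
      simp [hGdef, hw0]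
    have hre2 : ∑ k ∈ Finset.Icc 0 (ℓ - 2), G k = ∑ k ∈ Finset.Icc 1 (ℓ - 1), G k := by
      have e1 : ∑ k ∈ Finset.Icc 0 (ℓ - 2), G k = ∑ k ∈ Finset.Icc 0 (ℓ - 1), G k := by
        apply Finset.sum_subset
        · apply Finset.Icc_subset_Icc_right; omega
        · intro k hk hk'
          simp only [Finset.mem_Icc] at hk hk'
          have : k = ℓ - 1 := by omega
          rw [this, hGtop]
      have e2 : ∑ k ∈ Finset.Icc 1 (ℓ - 1), G k = ∑ k ∈ Finset.Icc 0 (ℓ - 1), G k := by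
        apply Finset.sum_subset
        · apply Finset.Icc_subset_Icc_left; omega
        · intro k hk hk'
          simp only [Finset.mem_Icc] at hk hk'
          have : k = 0 := by omega
          rw [this, hG0]
      rw [e1, ← e2]
    rw [hre, hre2, ← Finset.sum_add_distrib]
    -- pointwise comparison
    apply Finset.sum_le_sum
    intro j hj
    simp only [Finset.mem_Icc] at hj
    have hjℓ : (j:ℝ) ≤ (ℓ:ℝ) - 1 := by
      have : j ≤ ℓ - 1 := hj.2
      have : (j:ℝ) ≤ ((ℓ - 1 : ℕ):ℝ) := by exact_mod_cast this
      rwa [Nat.cast_sub hℓ, Nat.cast_one] at this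
    have hwj : 0 ≤ w j := hwnn j (by omega)
    have hwle : w (j+1) ≤ w j := by
      simp only [hwdef]
      have hc : ((j+1:ℕ):ℝ) = (j:ℝ) + 1 := by push_cast; ring
      rw [hc]
      apply mul_le_mul
      · exact pow_le_pow_of_le_one hτ' (by linarith) (by omega)
      · gcongr
        linarith
      · apply div_nonneg _ (le_of_lt hℓR); linarith
      · positivity
    have hanng : 0 ≤ a (i-1) j := hapos (i-1) j
    have hkey : a (i-1) j * ((j:ℝ)/ℓ) * w j + G j ≤ a (i-1) j * ((1 - τ) ^ j * (((ℓ:ℝ) - j)/ℓ)) := by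
      simp only [hGdef]
      have hwj' : w j = (1 - τ) ^ j * (((ℓ:ℝ) - j)/ℓ) := rfl
      rw [← hwj']
      have hp1 : (0:ℝ) ≤ ((ℓ:ℝ) - j)/ℓ := by
        apply div_nonneg _ (le_of_lt hℓR); linarith
      have h2 : a (i-1) j * (((ℓ:ℝ) - j)/ℓ) * w (j+1) ≤ a (i-1) j * (((ℓ:ℝ) - j)/ℓ) * w j := by
        apply mul_le_mul_of_nonneg_left hwle; positivity
      have heq : a (i-1) j * ((j:ℝ)/ℓ) * w j + a (i-1) j * (((ℓ:ℝ) - j)/ℓ) * w j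
          = a (i-1) j * w j := by
        field_simp; ring
      calc a (i-1) j * ((j:ℝ)/ℓ) * w j + a (i-1) j * (((ℓ:ℝ) - j)/ℓ) * w (j+1)
          ≤ a (i-1) j * ((j:ℝ)/ℓ) * w j + a (i-1) j * (((ℓ:ℝ) - j)/ℓ) * w j := by linarith
        _ = a (i-1) j * w j := heq
    calc a (i-1) j * ((j:ℝ)/ℓ) * w j + G j
        ≤ a (i-1) j * ((1 - τ) ^ j * (((ℓ:ℝ) - j)/ℓ)) := hkey
      _ = a (i-1) j * (1 - τ) ^ j * (((ℓ:ℝ) - j)/ℓ) := by ring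
  -- assemble
  intro i hi
  rcases Nat.lt_or_ge i 2 with hi2 | hi2
  · -- i = 1
    have hi1 : i = 1 := by omega
    subst hi1
    rw [hφ 2 (by norm_num), hφ1]
    norm_num only
    have hsum : ∑ j ∈ Finset.Icc 1 (min 1 (ℓ - 1)), a 1 j * (1 - τ) ^ j * (((ℓ:ℝ) - j)/ℓ) ≤ 1 := by
      rcases Nat.lt_or_ge ℓ 2 with h2 | h2
      · have : ℓ - 1 = 0 := by omega
        simp [this]
      · have hm : min 1 (ℓ - 1) = 1 := by omega
        rw [hm, Finset.Icc_self, Finset.sum_singleton, hinit]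
        have h1 : ((ℓ:ℝ) - 1)/ℓ ≤ 1 := by
          rw [div_le_one hℓR]; linarith
        have h0 : (0:ℝ) ≤ ((ℓ:ℝ) - 1)/ℓ := by
          apply div_nonneg _ (le_of_lt hℓR)
          have : (1:ℝ) ≤ ℓ := by exact_mod_cast hℓ
          linarith
        push_cast
        calc (1:ℝ) * (1 - τ) ^ 1 * (((ℓ:ℝ) - 1)/ℓ) = (1 - τ) * (((ℓ:ℝ) - 1)/ℓ) := by ring
          _ ≤ 1 * 1 := by
            apply mul_le_mul (by linarith) h1 h0 (by norm_num)
          _ = 1 := by norm_num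
    calc τ * ∑ j ∈ Finset.Icc 1 (min 1 (ℓ - 1)), a 1 j * (1 - τ) ^ j * (((ℓ:ℝ) - j)/ℓ)
        ≤ τ * 1 := by
          apply mul_le_mul_of_nonneg_left hsum (le_of_lt hτpos)
      _ = τ := by ring
  · -- i ≥ 2
    rw [hφ (i+1) (by omega), hφ i hi2]
    simp only [Nat.add_sub_cancel]
    apply mul_le_mul_of_nonneg_left _ (le_of_lt hτpos)
    rw [hext i (by omega), hext (i-1) (by omega)]
    exact hstep i hi2
end

section
/- For classic Sample-and-Hold with threshold τ ∈ (0,1): a key with integer frequency w has counted value C where P(C = c) = (1-τ)^{w-c}·τ for 1 ≤ c ≤ w and P(C = 0) = (1-τ)^w. For any f : ℕ → ℝ with f(0) = 0, define the estimate β_c = τ^{-1}(f(c) - f(c-1)(1-τ)) for c ≥ 1 and β₀ = 0. Then E[β_C] = f(w). -/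
/-- Unbiasedness of the classic Sample-and-Hold estimator: for a key of frequency `w`,
the counted value is `c` with probability `(1-τ)^{w-c}·τ` for `1 ≤ c ≤ w` (and `0` with the
remaining probability `(1-τ)^w`, contributing estimate `0`), and the estimate
`β c = τ⁻¹(f c - f (c-1)(1-τ))` has expectation `f w`. -/
theorem stmt_11 (τ : ℝ) (hτpos : 0 < τ) (hτ1 : τ < 1) (w : ℕ)
    (f : ℕ → ℝ) (hf0 : f 0 = 0) :
    ∑ c ∈ Finset.Icc 1 w,
        ((1 - τ) ^ (w - c) * τ) * (τ⁻¹ * (f c - f (c - 1) * (1 - τ))) = f w := by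
  have hτ : τ ≠ 0 := ne_of_gt hτpos
  induction w with
  | zero => simp [hf0]
  | succ n ih =>
    rw [Finset.sum_Icc_succ_top (by omega)]
    have hrw : ∀ c ∈ Finset.Icc 1 n,
        ((1 - τ) ^ (n + 1 - c) * τ) * (τ⁻¹ * (f c - f (c - 1) * (1 - τ)))
        = (1 - τ) * (((1 - τ) ^ (n - c) * τ) * (τ⁻¹ * (f c - f (c - 1) * (1 - τ)))) := by
      intro c hc
      simp only [Finset.mem_Icc] at hc
      have : n + 1 - c = (n - c) + 1 := by omega
      rw [this, pow_succ]
      ring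
    rw [Finset.sum_congr rfl hrw, ← Finset.mul_sum, ih]
    simp only [Nat.sub_self, pow_zero, Nat.add_sub_cancel]
    field_simp
    ring
end

section
/- Consider n keys, each key x assigned two independent random variables: y_x (continuously distributed, e.g., y_x ~ Exp(w_x)) and an independent uniform hash h_x ~ U[0,1], with all 2n variables independent. For each ℓ > 0, let S_ℓ be the set of k keys minimizing the seed s_ℓ(x) = h_x/ℓ if y_x ≤ 1/ℓ, else y_x. Then the expected number of distinct keys in ⋃_{ℓ > 0} S_ℓ is at most k·(1 + ln n) (i.e., k·H_n where H_n is the n-th harmonic number). -/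
/-!
Taking `ℓ = 1 / y x` shows that `x` lies in some `S_ℓ` exactly when fewer than `k` keys `z`
dominate it, i.e. have both `y z < y x` and `h z < h x`. Condition on `y`: if `i - 1` keys have a
smaller `y` than `x`, then `x` is dominated by fewer than `k` keys iff its hash is among the `k`
smallest of `i` i.i.d. continuous hashes, which by exchangeability has probability at most
`k / i`. Since `y` is a.s. injective, the ranks run through `1, …, n`, so the expected size of the
union is at most `k H_n ≤ k (1 + ln n)`.
-/

open MeasureTheory ProbabilityTheory Finset
open scoped ENNReal

section Rank

variable {ι α : Type*} [LinearOrder α]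

def numBelow (s : Finset ι) (v : ι → α) (x : ι) : ℕ := #{z ∈ s | v z < v x}

theorem numBelow_lt_card {s : Finset ι} {x : ι} (hx : x ∈ s) (v : ι → α) :
    numBelow s v x < #s :=
  card_lt_card <| filter_ssubset.2 ⟨x, hx, lt_irrefl _⟩

theorem numBelow_lt_numBelow {s : Finset ι} {v : ι → α} {x y : ι} (hx : x ∈ s)
    (hxy : v x < v y) : numBelow s v x < numBelow s v y := by
  refine card_lt_card <| (ssubset_iff_of_subset ?_).2 ⟨x, ?_, ?_⟩
  · intro z hz
    simp only [mem_filter] at hz ⊢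
    exact ⟨hz.1, hz.2.trans hxy⟩
  · simp [hx, hxy]
  · simp

theorem injOn_numBelow {s : Finset ι} {v : ι → α} (hv : Set.InjOn v s) :
    Set.InjOn (numBelow s v) s := by
  intro x hx y hy hxy
  rcases lt_trichotomy (v x) (v y) with hlt | heq | hgt
  · exact absurd hxy (numBelow_lt_numBelow hx hlt).ne
  · exact hv hx hy heq
  · exact absurd hxy (numBelow_lt_numBelow hy hgt).ne'

theorem card_filter_numBelow_lt_le {s : Finset ι} {v : ι → α} (hv : Set.InjOn v s) (k : ℕ) :
    #{x ∈ s | numBelow s v x < k} ≤ k := by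
  simpa using card_le_card_of_injOn (t := range k) (numBelow s v)
    (fun x hx => by simpa using (mem_filter.1 hx).2)
    ((injOn_numBelow hv).mono fun x hx => (mem_filter.1 hx).1)

theorem sum_numBelow_eq_sum_range {M : Type*} [AddCommMonoid M] {s : Finset ι} {v : ι → α}
    (hv : Set.InjOn v s) (g : ℕ → M) :
    ∑ x ∈ s, g (numBelow s v x) = ∑ i ∈ range #s, g i := by
  have himage : s.image (numBelow s v) = range #s := by
    refine eq_of_subset_of_card_le (fun i hi => ?_) ?_
    · obtain ⟨x, hx, rfl⟩ := mem_image.1 hi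
      exact mem_range.2 (numBelow_lt_card hx v)
    · rw [card_image_of_injOn (injOn_numBelow hv), card_range]
  rw [← himage, sum_image (injOn_numBelow hv)]

theorem numBelow_comp_equiv (s : Finset ι) (v : ι → α) (σ : ι ≃ ι) (x : ι) :
    numBelow s (v ∘ σ) x = numBelow (s.map σ.toEmbedding) v (σ x) := by
  simp [numBelow, filter_map, card_map]

end Rank

section CardFilter

variable {Ω ι : Type*} [MeasurableSpace Ω]

theorem measurable_card_filter {s : Finset ι} {P : ι → Ω → Prop} [∀ ω, DecidablePred (P · ω)]
    (hP : ∀ i ∈ s, MeasurableSet {ω | P i ω}) : Measurable fun ω => #{i ∈ s | P i ω} := by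
  simp_rw [card_filter]
  exact Finset.measurable_sum _ fun i hi => Measurable.ite (hP i hi) measurable_const
    measurable_const

theorem lintegral_card_filter (m : Measure Ω) {s : Finset ι} {P : ι → Ω → Prop}
    [∀ ω, DecidablePred (P · ω)] (hP : ∀ i ∈ s, MeasurableSet {ω | P i ω}) :
    ∫⁻ ω, (#{i ∈ s | P i ω} : ℝ≥0∞) ∂m = ∑ i ∈ s, m {ω | P i ω} := by
  have hind : ∀ ω, (#{i ∈ s | P i ω} : ℝ≥0∞) = ∑ i ∈ s, {ω | P i ω}.indicator 1 ω := by
    intro ω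
    simp only [Set.indicator_apply, Set.mem_ofPred_eq, Pi.one_apply, sum_boole]
  simp_rw [hind]
  rw [lintegral_finsetSum _ fun i hi => measurable_one.indicator (hP i hi)]
  exact sum_congr rfl fun i hi => lintegral_indicator_one (hP i hi)

end CardFilter

theorem ProbabilityTheory.IndepFun.measure_setOf_eq_eq_zero {Ω : Type*} [MeasurableSpace Ω]
    {μ : Measure Ω} [IsFiniteMeasure μ] {X Y : Ω → ℝ} (hX : Measurable X) (hY : Measurable Y)
    (hXY : IndepFun X Y μ) (hY0 : ∀ c, μ {ω | Y ω = c} = 0) : μ {ω | X ω = Y ω} = 0 := by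
  have hdiag : MeasurableSet {p : ℝ × ℝ | p.1 = p.2} :=
    measurableSet_eq_fun measurable_fst measurable_snd
  have hlaw := (indepFun_iff_map_prod_eq_prod_map_map hX.aemeasurable hY.aemeasurable).1 hXY
  calc μ {ω | X ω = Y ω} = (μ.map fun ω => (X ω, Y ω)) {p | p.1 = p.2} :=
        (Measure.map_apply (hX.prodMk hY) hdiag).symm
    _ = ∫⁻ a, μ.map Y {a} ∂μ.map X := by
        rw [hlaw, Measure.prod_apply hdiag]
        congr! with a
        ext b
        simp [eq_comm]
    _ = 0 := by
        simp_rw [Measure.map_apply hY (measurableSet_singleton _)]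
        exact (lintegral_congr fun a => hY0 a).trans lintegral_zero

theorem ae_injective_pi {ι : Type*} [Fintype ι] (μ : ι → Measure ℝ)
    [∀ i, IsProbabilityMeasure (μ i)] [∀ i, NullSingletonClass (μ i)] :
    ∀ᵐ v ∂Measure.pi μ, Function.Injective v := by
  have hcoord : iIndepFun (fun i (v : ι → ℝ) => v i) (Measure.pi μ) :=
    iIndepFun_pi (X := fun _ => id) fun _ => aemeasurable_id
  have hpair : ∀ i j, ∀ᵐ v ∂Measure.pi μ, v i = v j → i = j := by
    intro i j
    by_cases hij : i = j
    · exact Filter.Eventually.of_forall fun _ _ => hij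
    exact measure_mono_null (fun v hv => (Classical.not_imp.1 hv).1)
      ((hcoord.indepFun hij).measure_setOf_eq_eq_zero (measurable_pi_apply i)
        (measurable_pi_apply j) fun c => Measure.pi_eval_preimage_null μ (measure_singleton c))
  filter_upwards [ae_all_iff.2 fun i => ae_all_iff.2 (hpair i)] with v hv i j
  exact hv i j

theorem ProbabilityTheory.iIndepFun.map_sumElim_eq_prod {Ω ι κ β : Type*} [MeasurableSpace Ω]
    [Fintype ι] [Fintype κ] [MeasurableSpace β] {μ : Measure Ω} {y : ι → Ω → β}
    {h : κ → Ω → β} (hind : iIndepFun (Sum.elim y h) μ) (hy : ∀ i, Measurable (y i))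
    (hh : ∀ j, Measurable (h j)) :
    μ.map (fun ω => ((fun i => y i ω), fun j => h j ω)) =
      (Measure.pi fun i => μ.map (y i)).prod (Measure.pi fun j => μ.map (h j)) := by
  have := hind.isProbabilityMeasure
  have hmeas : ∀ j, Measurable (Sum.elim y h j) := Sum.rec hy hh
  rw [show (fun ω => ((fun i => y i ω), fun j => h j ω)) =
      MeasurableEquiv.sumPiEquivProdPi (fun _ => β) ∘ fun ω j => Sum.elim y h j ω from rfl,
    ← Measure.map_map (MeasurableEquiv.measurable _) (measurable_pi_lambda _ hmeas),
    hind.map_fun_eq_pi_map fun j => (hmeas j).aemeasurable,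
    (measurePreserving_sumPiEquivProdPi _).map_eq]
  rfl

instance ProbabilityTheory.cond.instNullSingletonClass {α : Type*} [MeasurableSpace α]
    {μ : Measure α} [NullSingletonClass μ] (s : Set α) : NullSingletonClass μ[|s] :=
  ⟨fun c => by rw [cond, Measure.smul_apply, measure_singleton, smul_zero]⟩

theorem MeasureTheory.pdf.IsUniform.ae_mem {Ω E : Type*} [MeasurableSpace Ω] [MeasurableSpace E]
    {X : Ω → E} {s : Set E} {P : Measure Ω} {μ : Measure E} (hu : pdf.IsUniform X s P μ)
    (hX : AEMeasurable X P) (hs : MeasurableSet s) : ∀ᵐ ω ∂P, X ω ∈ s :=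
  ae_of_ae_map hX (hu ▸ ae_cond_mem hs)

theorem measurable_numBelow {ι : Type*} (s : Finset ι) (x : ι) :
    Measurable fun v : ι → ℝ => numBelow s v x :=
  measurable_card_filter fun z _ => measurableSet_lt (measurable_pi_apply z) (measurable_pi_apply x)

theorem measurableSet_numBelow_lt {ι : Type*} (s : Finset ι) (x : ι) (k : ℕ) :
    MeasurableSet {v : ι → ℝ | numBelow s v x < k} :=
  measurableSet_lt (measurable_numBelow s x) measurable_const

section Exchangeable

variable {ι : Type*} [Fintype ι] (ν : Measure ℝ)

theorem pi_numBelow_lt_eq [DecidableEq ι] [SigmaFinite ν] {T : Finset ι} {w x : ι} (hw : w ∈ T)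
    (hx : x ∈ T) (k : ℕ) :
    Measure.pi (fun _ => ν) {v | numBelow T v w < k} =
      Measure.pi (fun _ => ν) {v | numBelow T v x < k} := by
  set σ := Equiv.swap w x
  have hT : T.map σ.toEmbedding = T := map_perm fun z hz => by
    by_contra hzT
    exact hz (Equiv.swap_apply_of_ne_of_ne (fun h => hzT (h ▸ hw)) fun h => hzT (h ▸ hx))
  have hpre : MeasurableEquiv.piCongrLeft (fun _ => ℝ) σ ⁻¹' {v | numBelow T v x < k} =
      {v | numBelow T v w < k} := by
    ext v
    have hcomp : MeasurableEquiv.piCongrLeft (fun _ => ℝ) σ v = v ∘ σ := by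
      ext j
      simp [MeasurableEquiv.piCongrLeft, Equiv.piCongrLeft_apply_eq_cast, σ]
    simp [hcomp, numBelow_comp_equiv, hT, σ]
  rw [← hpre, (measurePreserving_piCongrLeft (fun _ => ν) σ).measure_preimage
    (measurableSet_numBelow_lt T x k).nullMeasurableSet]

theorem pi_numBelow_lt_le [IsProbabilityMeasure ν] [NullSingletonClass ν] {T : Finset ι} {x : ι}
    (hx : x ∈ T) (k : ℕ) :
    Measure.pi (fun _ => ν) {v | numBelow T v x < k} ≤ k / #T := by
  classical
  -- By exchangeability every key of `T` is equally likely to have fewer than `k` keys below it,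
  -- and almost surely at most `k` keys do.
  have hsum : ∑ w ∈ T, Measure.pi (fun _ => ν) {v | numBelow T v w < k} ≤ k := by
    rw [← lintegral_card_filter _ fun w _ => measurableSet_numBelow_lt T w k]
    calc ∫⁻ v, (#{w ∈ T | numBelow T v w < k} : ℝ≥0∞) ∂Measure.pi (fun _ => ν)
        ≤ ∫⁻ _, (k : ℝ≥0∞) ∂Measure.pi (fun _ => ν) :=
          lintegral_mono_ae <| (ae_injective_pi _).mono fun v hv => by
            exact_mod_cast card_filter_numBelow_lt_le hv.injOn k
      _ = k := by simp
  rw [sum_congr rfl fun w hw => pi_numBelow_lt_eq ν hw hx k, sum_const, nsmul_eq_mul] at hsum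
  rw [ENNReal.le_div_iff_mul_le (Or.inl (by simpa using card_ne_zero_of_mem hx))
    (Or.inl (ENNReal.natCast_ne_top _)), mul_comm]
  exact hsum

end Exchangeable

section Dominance

variable {ι : Type*} [Fintype ι]

noncomputable def dominatedByFewer (k : ℕ) (u v : ι → ℝ) : Finset ι :=
  {x | #{z | u z < u x ∧ v z < v x} < k}

theorem measurableSet_card_dominators_lt (k : ℕ) (x : ι) :
    MeasurableSet {p : (ι → ℝ) × (ι → ℝ) | #{z | p.1 z < p.1 x ∧ p.2 z < p.2 x} < k} :=
  measurableSet_lt (measurable_card_filter fun z _ =>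
    (measurableSet_lt ((measurable_pi_apply z).comp measurable_fst)
      ((measurable_pi_apply x).comp measurable_fst)).inter
    (measurableSet_lt ((measurable_pi_apply z).comp measurable_snd)
      ((measurable_pi_apply x).comp measurable_snd))) measurable_const

theorem measurable_card_dominatedByFewer (k : ℕ) :
    Measurable fun p : (ι → ℝ) × (ι → ℝ) => #(dominatedByFewer k p.1 p.2) :=
  measurable_card_filter fun x _ => measurableSet_card_dominators_lt k x

theorem pi_card_dominators_lt_le (ν : Measure ℝ) [IsProbabilityMeasure ν] [NullSingletonClass ν]
    (u : ι → ℝ) (x : ι) (k : ℕ) :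
    Measure.pi (fun _ => ν) {v | #{z | u z < u x ∧ v z < v x} < k} ≤
      k / (numBelow univ u x + 1) := by
  classical
  have hdom : ∀ v : ι → ℝ, #{z | u z < u x ∧ v z < v x} =
      numBelow (insert x (univ.filter fun z => u z < u x)) v x := by
    intro v
    unfold numBelow
    congr 1
    ext z
    by_cases hz : z = x <;> simp [hz]
  simp_rw [hdom]
  refine (pi_numBelow_lt_le ν (mem_insert_self _ _) k).trans_eq ?_
  rw [card_insert_of_notMem (by simp)]
  simp [numBelow]

theorem lintegral_card_dominatedByFewer_le (mY : Measure (ι → ℝ)) [IsProbabilityMeasure mY]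
    (hY : ∀ᵐ u ∂mY, Function.Injective u) (ν : Measure ℝ) [IsProbabilityMeasure ν]
    [NullSingletonClass ν] (k : ℕ) :
    ∫⁻ p, (#(dominatedByFewer k p.1 p.2) : ℝ≥0∞) ∂mY.prod (Measure.pi fun _ => ν) ≤
      ∑ i ∈ range (Fintype.card ι), (k : ℝ≥0∞) / (i + 1) := by
  have hrank : ∀ x, Measurable fun u : ι → ℝ => (k : ℝ≥0∞) / (numBelow univ u x + 1) :=
    fun x => (measurable_from_nat (f := fun i : ℕ => (k : ℝ≥0∞) / (i + 1))).comp
      (measurable_numBelow univ x)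
  calc ∫⁻ p, (#(dominatedByFewer k p.1 p.2) : ℝ≥0∞) ∂mY.prod (Measure.pi fun _ => ν)
      = ∑ x, ∫⁻ u, Measure.pi (fun _ => ν)
          (Prod.mk u ⁻¹' {p | #{z | p.1 z < p.1 x ∧ p.2 z < p.2 x} < k}) ∂mY := by
        simp only [dominatedByFewer]
        rw [lintegral_card_filter _ fun x _ => measurableSet_card_dominators_lt k x]
        simp_rw [Measure.prod_apply (measurableSet_card_dominators_lt k _)]
    _ ≤ ∑ x, ∫⁻ u, (k : ℝ≥0∞) / (numBelow univ u x + 1) ∂mY := by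
        gcongr with x u
        exact pi_card_dominators_lt_le ν u x k
    _ = ∫⁻ u, ∑ x, (k : ℝ≥0∞) / (numBelow univ u x + 1) ∂mY :=
        (lintegral_finsetSum _ fun x _ => hrank x).symm
    _ = ∫⁻ _, ∑ i ∈ range (Fintype.card ι), (k : ℝ≥0∞) / (i + 1) ∂mY :=
        lintegral_congr_ae <| hY.mono fun u hu =>
          sum_numBelow_eq_sum_range hu.injOn fun i => (k : ℝ≥0∞) / (i + 1)
    _ = ∑ i ∈ range (Fintype.card ι), (k : ℝ≥0∞) / (i + 1) := by simp

theorem integral_card_dominatedByFewer_le (mY : Measure (ι → ℝ)) [IsProbabilityMeasure mY]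
    (hY : ∀ᵐ u ∂mY, Function.Injective u) (ν : Measure ℝ) [IsProbabilityMeasure ν]
    [NullSingletonClass ν] (k : ℕ) :
    ∫ p, (#(dominatedByFewer k p.1 p.2) : ℝ) ∂mY.prod (Measure.pi fun _ => ν) ≤
      k * harmonic (Fintype.card ι) := by
  rw [integral_eq_lintegral_of_nonneg_ae (ae_of_all _ fun _ => Nat.cast_nonneg _)
    ((measurable_from_nat (f := ((↑) : ℕ → ℝ))).comp
      (measurable_card_dominatedByFewer k)).aestronglyMeasurable]
  simp_rw [ENNReal.ofReal_natCast]
  refine (ENNReal.toReal_mono (ENNReal.sum_ne_top.2 fun i _ => ?_)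
    (lintegral_card_dominatedByFewer_le mY hY ν k)).trans_eq ?_
  · exact ENNReal.div_ne_top (ENNReal.natCast_ne_top k) (by simp)
  · rw [ENNReal.toReal_sum fun i _ => ENNReal.div_ne_top (ENNReal.natCast_ne_top k) (by simp)]
    simp [harmonic, mul_sum, div_eq_mul_inv, ENNReal.toReal_add]

end Dominance

section Seed

variable {ι : Type*} [Fintype ι]

noncomputable def seed (ℓ : ℝ) (u v : ι → ℝ) (z : ι) : ℝ :=
  if u z ≤ 1 / ℓ then v z / ℓ else u z

theorem dominators_subset_filter_seed_lt {u v : ι → ℝ} (hv : ∀ i, v i ≤ 1) {ℓ : ℝ} (hℓ : 0 < ℓ)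
    (x : ι) :
    ({z | u z < u x ∧ v z < v x} : Finset ι) ⊆
      ({z | seed ℓ u v z < seed ℓ u v x} : Finset ι) := by
  intro z hz
  simp only [mem_filter, mem_univ, true_and] at hz ⊢
  obtain ⟨huz, hvz⟩ := hz
  unfold seed
  by_cases hux : u x ≤ 1 / ℓ
  · rw [if_pos hux, if_pos (huz.le.trans hux)]
    exact div_lt_div_of_pos_right hvz hℓ
  · rw [if_neg hux]
    split_ifs
    · exact (div_le_div_of_nonneg_right (hv z) hℓ.le).trans_lt (not_le.1 hux)
    · exact huz

theorem filter_seed_lt_eq_dominators {u v : ι → ℝ} (hu : Function.Injective u) {x : ι}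
    (hux : 0 < u x) (hvx : v x ≤ 1) :
    ({z | seed (1 / u x) u v z < seed (1 / u x) u v x} : Finset ι) =
      ({z | u z < u x ∧ v z < v x} : Finset ι) := by
  ext z
  simp only [mem_filter, mem_univ, true_and, seed, one_div_one_div, le_refl, if_true]
  split_ifs with huz
  · rw [div_lt_div_iff_of_pos_right (by positivity)]
    refine ⟨fun hvz => ⟨huz.lt_of_ne fun h => ?_, hvz⟩, And.right⟩
    rw [hu h] at hvz
    exact lt_irrefl _ hvz
  · have hseed : v x / (1 / u x) ≤ u x := by
      rw [one_div, div_inv_eq_mul]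
      exact mul_le_of_le_one_left hux.le hvx
    exact iff_of_false (fun h => huz (h.trans_le hseed).le) fun h => huz h.1.le

open Classical in
theorem filter_exists_seed_eq_dominatedByFewer {u v : ι → ℝ} (hu : Function.Injective u)
    (hu0 : ∀ i, 0 < u i) (hv : ∀ i, v i ≤ 1) (k : ℕ) :
    ({x | ∃ ℓ, 0 < ℓ ∧ #{z | seed ℓ u v z < seed ℓ u v x} < k} : Finset ι) =
      dominatedByFewer k u v := by
  refine filter_congr fun x _ => ⟨fun ⟨ℓ, hℓ, hcard⟩ => ?_, fun hcard => ?_⟩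
  · exact (card_le_card (dominators_subset_filter_seed_lt hv hℓ x)).trans_lt hcard
  · exact ⟨1 / u x, by simpa using hu0 x, by rwa [filter_seed_lt_eq_dominators hu (hu0 x) (hv x)]⟩

end Seed

open Classical in
theorem stmt_16_general {Ω : Type*} [MeasurableSpace Ω] (μ : Measure Ω) [IsProbabilityMeasure μ]
    (n k : ℕ)
    (y h : Fin n → Ω → ℝ)
    (hymeas : ∀ i, Measurable (y i)) (hhmeas : ∀ i, Measurable (h i))
    (hindep : iIndepFun (Sum.elim y h) μ)
    (hycont : ∀ i (c : ℝ), μ {ω | y i ω = c} = 0)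
    (hyrange : ∀ i, ∀ᵐ ω ∂μ, 0 < y i ω)
    (hhunif : ∀ i, MeasureTheory.pdf.IsUniform (h i) (Set.Icc 0 1) μ volume) :
    ∫ ω, ((Finset.univ.filter (fun x : Fin n => ∃ ℓ : ℝ, 0 < ℓ ∧
        (Finset.univ.filter (fun z : Fin n =>
          (if y z ω ≤ 1 / ℓ then h z ω / ℓ else y z ω) <
          (if y x ω ≤ 1 / ℓ then h x ω / ℓ else y x ω))).card < k)).card : ℝ) ∂μ
      ≤ k * (1 + Real.log n) := by
  have : IsProbabilityMeasure volume[|Set.Icc (0 : ℝ) 1] :=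
    cond_isProbabilityMeasure_of_finite (by simp) (by simp)
  have : ∀ i, IsProbabilityMeasure (μ.map (y i)) :=
    fun i => Measure.isProbabilityMeasure_map (hymeas i).aemeasurable
  have : ∀ i, NullSingletonClass (μ.map (y i)) := fun i =>
    ⟨fun c => by rw [Measure.map_apply (hymeas i) (measurableSet_singleton c)]; exact hycont i c⟩
  have hY_inj : ∀ᵐ ω ∂μ, Function.Injective fun i => y i ω := by
    refine ae_of_ae_map (measurable_pi_lambda _ hymeas).aemeasurable ?_
    rw [(hindep.precomp Sum.inl_injective).map_fun_eq_pi_map fun i => (hymeas i).aemeasurable]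
    exact ae_injective_pi _
  have hh_le : ∀ᵐ ω ∂μ, ∀ i, h i ω ≤ 1 := ae_all_iff.2 fun i =>
    (pdf.IsUniform.ae_mem (hhunif i) (hhmeas i).aemeasurable measurableSet_Icc).mono
      fun _ hmem => hmem.2
  calc _ = ∫ ω, (#(dominatedByFewer k (fun i => y i ω) fun i => h i ω) : ℝ) ∂μ := by
        refine integral_congr_ae ?_
        filter_upwards [hY_inj, ae_all_iff.2 hyrange, hh_le] with ω hinj hpos hle
        exact congrArg (fun s : Finset (Fin n) => (#s : ℝ))
          (filter_exists_seed_eq_dominatedByFewer hinj hpos hle k)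
    _ = ∫ p, (#(dominatedByFewer k p.1 p.2) : ℝ)
          ∂μ.map fun ω => ((fun i => y i ω), fun i => h i ω) :=
        (integral_map ((measurable_pi_lambda _ hymeas).prodMk
          (measurable_pi_lambda _ hhmeas)).aemeasurable
          ((measurable_from_nat (f := ((↑) : ℕ → ℝ))).comp
            (measurable_card_dominatedByFewer k)).aestronglyMeasurable).symm
    _ ≤ k * harmonic n := by
        have hH : (fun i => μ.map (h i)) = fun _ => volume[|Set.Icc (0 : ℝ) 1] := funext hhunif
        rw [hindep.map_sumElim_eq_prod hymeas hhmeas, hH]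
        simpa using integral_card_dominatedByFewer_le _ (ae_injective_pi fun i => μ.map (y i)) _ k
    _ ≤ k * (1 + Real.log n) := by
        gcongr
        exact harmonic_le_one_add_log n

open MeasureTheory ProbabilityTheory Classical in
/-- Coordinated multi-objective sample size bound: `n` keys with independent
`y x` (exponential/continuous) and `h x ~ U[0,1]`, seed
`s_ℓ(x) = h x/ℓ` if `y x ≤ 1/ℓ` else `y x`, and `S_ℓ` the set of `k` keys with smallest
seeds.  The expected number of distinct keys in `⋃_{ℓ>0} S_ℓ` is at most `k(1 + ln n)`. -/
theorem stmt_16 {Ω : Type*} [MeasurableSpace Ω] (μ : Measure Ω) [IsProbabilityMeasure μ]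
    (n k : ℕ) (hn : 0 < n) (hk : 0 < k)
    (y h : Fin n → Ω → ℝ)
    (hymeas : ∀ i, Measurable (y i)) (hhmeas : ∀ i, Measurable (h i))
    (hindep : iIndepFun (Sum.elim y h) μ)
    (hycont : ∀ i (c : ℝ), μ {ω | y i ω = c} = 0)
    (hyrange : ∀ i, ∀ᵐ ω ∂μ, 0 < y i ω)
    (hhunif : ∀ i, MeasureTheory.pdf.IsUniform (h i) (Set.Icc 0 1) μ volume) :
    ∫ ω, ((Finset.univ.filter (fun x : Fin n => ∃ ℓ : ℝ, 0 < ℓ ∧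
        (Finset.univ.filter (fun z : Fin n =>
          (if y z ω ≤ 1 / ℓ then h z ω / ℓ else y z ω) <
          (if y x ω ≤ 1 / ℓ then h x ω / ℓ else y x ω))).card < k)).card : ℝ) ∂μ
      ≤ k * (1 + Real.log n) :=
  stmt_16_general μ n k y h hymeas hhmeas hindep hycont hyrange hhunif
end

section
/- In the coordinated-sample setting above, for each fixed key x, the set {ℓ > 0 : x ∈ S_ℓ} is an interval of the extended positive reals: if x ∈ S_{ℓ₁} and x ∈ S_{ℓ₂} with ℓ₁ < ℓ₂ then x ∈ S_ℓ for all ℓ ∈ [ℓ₁, ℓ₂]. -/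
open Classical in
/-- Contiguity of membership in coordinated `SH_ℓ` samples: with fixed values `y z > 0`
and `h z ∈ (0,1)` (all `y` and all `h` values distinct, and all seeds distinct for each
`ℓ`), if key `x` is among the `k` smallest seeds for parameters `ℓ₁ < ℓ₂`, then it is for
every `ℓ ∈ [ℓ₁, ℓ₂]` as well. -/
theorem stmt_17 (n k : ℕ) (hk : 0 < k)
    (y h : Fin n → ℝ)
    (hypos : ∀ z, 0 < y z) (hhrange : ∀ z, h z ∈ Set.Ioo (0 : ℝ) 1)
    (hyinj : Function.Injective y) (hhinj : Function.Injective h)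
    (hseedinj : ∀ ℓ : ℝ, 0 < ℓ →
      Function.Injective (fun z : Fin n => if y z ≤ 1 / ℓ then h z / ℓ else y z))
    (x : Fin n) (ℓ₁ ℓ₂ ℓ : ℝ) (hℓ₁ : 0 < ℓ₁) (h12 : ℓ₁ < ℓ₂)
    (hmem : ℓ ∈ Set.Icc ℓ₁ ℓ₂)
    (h1 : (Finset.univ.filter (fun z : Fin n =>
        (if y z ≤ 1 / ℓ₁ then h z / ℓ₁ else y z) <
        (if y x ≤ 1 / ℓ₁ then h x / ℓ₁ else y x))).card < k)
    (h2 : (Finset.univ.filter (fun z : Fin n =>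
        (if y z ≤ 1 / ℓ₂ then h z / ℓ₂ else y z) <
        (if y x ≤ 1 / ℓ₂ then h x / ℓ₂ else y x))).card < k) :
    (Finset.univ.filter (fun z : Fin n =>
        (if y z ≤ 1 / ℓ then h z / ℓ else y z) <
        (if y x ≤ 1 / ℓ then h x / ℓ else y x))).card < k := by
  obtain ⟨hl1, hl2⟩ := hmem
  have hℓ : 0 < ℓ := lt_of_lt_of_le hℓ₁ hl1
  have hℓ₂ : 0 < ℓ₂ := lt_trans hℓ₁ h12
  have hinv1 : 1 / ℓ ≤ 1 / ℓ₁ := one_div_le_one_div_of_le hℓ₁ hl1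
  have hinv2 : 1 / ℓ₂ ≤ 1 / ℓ := one_div_le_one_div_of_le hℓ hl2
  by_cases hx : y x ≤ 1 / ℓ
  · -- x in prefix at ℓ, hence at ℓ₁; set shrinks relative to ℓ₁
    have hx1 : y x ≤ 1 / ℓ₁ := hx.trans hinv1
    refine lt_of_le_of_lt (Finset.card_le_card ?_) h1
    intro z hz
    simp only [Finset.mem_filter, Finset.mem_univ, true_and] at hz ⊢
    rw [if_pos hx] at hz
    rw [if_pos hx1]
    by_cases hz' : y z ≤ 1 / ℓ
    · rw [if_pos hz'] at hz
      have hzh : h z < h x := by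
        have := (div_lt_div_iff_of_pos_right hℓ).mp hz
        exact this
      rw [if_pos (hz'.trans hinv1)]
      exact (div_lt_div_iff_of_pos_right hℓ₁).mpr hzh
    · rw [if_neg hz'] at hz
      exfalso
      have h1ℓ : 1 / ℓ < y z := lt_of_not_ge hz'
      have : h x / ℓ < 1 / ℓ :=
        (div_lt_div_iff_of_pos_right hℓ).mpr (hhrange x).2
      linarith
  · -- x not in prefix at ℓ, hence not at ℓ₂; sets equal
    have hx2 : ¬ y x ≤ 1 / ℓ₂ := fun hc => hx (hc.trans hinv2)
    have hxℓ : 1 / ℓ < y x := lt_of_not_ge hx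
    have hxℓ₂ : 1 / ℓ₂ < y x := lt_of_not_ge hx2
    have key : ∀ (L : ℝ), 0 < L → 1 / L < y x → ∀ z,
        ((if y z ≤ 1 / L then h z / L else y z) < y x ↔ y z < y x) := by
      intro L hL hxL z
      by_cases hz' : y z ≤ 1 / L
      · rw [if_pos hz']
        have : h z / L < 1 / L :=
          (div_lt_div_iff_of_pos_right hL).mpr (hhrange z).2
        constructor
        · intro _; linarith
        · intro _; linarith
      · rw [if_neg hz']
    have : (Finset.univ.filter (fun z : Fin n =>
        (if y z ≤ 1 / ℓ then h z / ℓ else y z) <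
        (if y x ≤ 1 / ℓ then h x / ℓ else y x))) =
        (Finset.univ.filter (fun z : Fin n =>
        (if y z ≤ 1 / ℓ₂ then h z / ℓ₂ else y z) <
        (if y x ≤ 1 / ℓ₂ then h x / ℓ₂ else y x))) := by
      apply Finset.filter_congr
      intro z _
      rw [if_neg hx, if_neg hx2]
      simp only [key ℓ hℓ hxℓ z, key ℓ₂ hℓ₂ hxℓ₂ z]
    rw [this]
    exact h2
end

section
/- Let N ~ Geometric on {1, 2, 3, …} with success probability τ, truncated at w+1: P(N = i) = (1-τ)^{i-1}τ for 1 ≤ i ≤ w and P(N = w+1) = (1-τ)^w. Set C = w - N + 1 (so C = 0 iff N = w+1). Then P(C ≥ 1) = 1 - (1-τ)^w, and the conditional estimator β_c = τ^{-1}(f(c) - (1-τ)f(c-1)) satisfies Σ_{c=1}^{w} P(C = c)·β_c = f(w) for every f with f(0) = 0; moreover if f is non-decreasing then β_c ≥ 0 for all c ≥ 1. -/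
/-! Weighting the increments `f c - q f (c - 1)` by `q ^ (w - c)` makes the sum over `c ∈ [1, w]`
telescope to `f w - q ^ w f 0`. With `q = 1 - τ` this gives unbiasedness once the factor `τ τ⁻¹`
cancels, and applied to `f c = 1 - q ^ c`, whose increments are the constant `1 - q = τ`, it gives
the total mass `1 - (1 - τ) ^ w`. -/

open Finset

theorem sum_Icc_pow_mul_sub_mul_pred {K : Type*} [CommRing K] (q : K) (f : ℕ → K) (hf0 : f 0 = 0)
    (w : ℕ) : ∑ c ∈ Icc 1 w, q ^ (w - c) * (f c - q * f (c - 1)) = f w := by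
  induction w with
  | zero => simp [hf0]
  | succ n ih =>
    have hshift : ∀ c ∈ Icc 1 n, q ^ (n + 1 - c) * (f c - q * f (c - 1)) =
        q * (q ^ (n - c) * (f c - q * f (c - 1))) := by
      intro c hc
      rw [Nat.sub_add_comm (mem_Icc.mp hc).2, pow_succ]
      ring
    rw [sum_Icc_succ_top (Nat.le_add_left 1 n), sum_congr rfl hshift, ← mul_sum, ih]
    simp

theorem sum_Icc_pow_mul_one_sub {K : Type*} [CommRing K] (q : K) (w : ℕ) :
    ∑ c ∈ Icc 1 w, q ^ (w - c) * (1 - q) = 1 - q ^ w := by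
  have hincr : ∀ c ∈ Icc 1 w, q ^ (w - c) * (1 - q) =
      q ^ (w - c) * ((1 - q ^ c) - q * (1 - q ^ (c - 1))) := by
    intro c hc
    obtain ⟨c, rfl⟩ := Nat.exists_eq_add_of_le' (mem_Icc.mp hc).1
    rw [Nat.add_sub_cancel, pow_succ]
    ring
  rw [sum_congr rfl hincr]
  exact sum_Icc_pow_mul_sub_mul_pred q (fun c => 1 - q ^ c) (by simp) w

theorem inv_mul_sub_one_sub_mul_nonneg {K : Type*} [Field K] [LinearOrder K] [IsStrictOrderedRing K]
    {τ : K} (hτ : 0 ≤ τ) {f : ℕ → K} (hf : Monotone f) (hf0 : f 0 = 0) (c : ℕ) :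
    0 ≤ τ⁻¹ * (f c - (1 - τ) * f (c - 1)) := by
  have hprev : 0 ≤ f (c - 1) := hf0 ▸ hf (Nat.zero_le _)
  have hstep : f (c - 1) ≤ f c := hf (Nat.sub_le c 1)
  refine mul_nonneg (inv_nonneg.mpr hτ) ?_
  nlinarith

theorem stmt_18_general (τ : ℝ) (hτpos : 0 < τ) (w : ℕ) (f : ℕ → ℝ) (hf0 : f 0 = 0) :
    (∑ c ∈ Finset.Icc 1 w, (1 - τ) ^ (w - c) * τ = 1 - (1 - τ) ^ w) ∧
    (∑ c ∈ Finset.Icc 1 w,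
        ((1 - τ) ^ (w - c) * τ) * (τ⁻¹ * (f c - (1 - τ) * f (c - 1))) = f w) ∧
    (Monotone f → ∀ c, 1 ≤ c → 0 ≤ τ⁻¹ * (f c - (1 - τ) * f (c - 1))) := by
  refine ⟨?_, ?_, fun hf c _ => inv_mul_sub_one_sub_mul_nonneg hτpos.le hf hf0 c⟩
  · simpa using sum_Icc_pow_mul_one_sub (1 - τ) w
  · have hcancel : ∀ c ∈ Icc 1 w, ((1 - τ) ^ (w - c) * τ) * (τ⁻¹ * (f c - (1 - τ) * f (c - 1))) =
        (1 - τ) ^ (w - c) * (f c - (1 - τ) * f (c - 1)) := by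
      intro c _
      field_simp
    rw [sum_congr rfl hcancel]
    exact sum_Icc_pow_mul_sub_mul_pred (1 - τ) f hf0 w

/-- Combined statement for classic Sample-and-Hold: for a key of frequency `w` the counted
value `C = w - N + 1` (with `N` geometric with success probability `τ` truncated at `w+1`)
satisfies `P(C ≥ 1) = ∑_{c=1}^{w} (1-τ)^{w-c} τ = 1 - (1-τ)^w`; the estimator
`β c = τ⁻¹(f c - (1-τ) f (c-1))` is unbiased: `∑_{c=1}^{w} P(C = c) β c = f w` whenever
`f 0 = 0`; and `β c ≥ 0` for `c ≥ 1` when `f` is non-decreasing. -/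
theorem stmt_18 (τ : ℝ) (hτpos : 0 < τ) (hτ1 : τ < 1) (w : ℕ) (f : ℕ → ℝ) (hf0 : f 0 = 0) :
    (∑ c ∈ Finset.Icc 1 w, (1 - τ) ^ (w - c) * τ = 1 - (1 - τ) ^ w) ∧
    (∑ c ∈ Finset.Icc 1 w,
        ((1 - τ) ^ (w - c) * τ) * (τ⁻¹ * (f c - (1 - τ) * f (c - 1))) = f w) ∧
    (Monotone f → ∀ c, 1 ≤ c → 0 ≤ τ⁻¹ * (f c - (1 - τ) * f (c - 1))) :=
  stmt_18_general τ hτpos w f hf0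
end
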